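/- arXiv:2509.14215 — 4 statements merged into one kernel-verified Lean document; each statement's English description precedes it below -/
import Mathlib

section
/- In the Clifford algebra of the hyperbolic quadratic form Q on (Fin n → K) × (Fin n → K), the quadratic elements F^a * E_b satisfy the gl(n) commutation relations: (F^a * E_b) * (F^c * E_d) − (F^c * E_d) * (F^a * E_b) = δ_b^c • (F^a * E_d) − δ_d^a • (F^c * E_b), for all a, b, c, d ∈ Fin n. In particular, the linear span of the elements F^a * E_b is closed under the commutator. -/
/-!
The polar form of the hyperbolic form pairs the two halves of `V`, so in the Clifford algebra the
`E_b` and `F^a` satisfy the canonical anticommutation relations `E_b F^c + F^c E_b = δ_bc`,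
`E_b E_d + E_d E_b = 0`, `F^a F^c + F^c F^a = 0`. Moving `E_b` past `F^c` in `(F^a E_b)(F^c E_d)`
produces `δ_bc F^a E_d` plus a quartic term; the quartic term equals the one from the reversed
product after anticommuting both the `F`s and the `E`s, so only the two `δ`-terms survive.
Closure of the span then follows from bilinearity of the commutator.
-/

open CliffordAlgebra

section Anticommutation

variable {K A : Type*} [CommRing K] [Ring A] [Algebra K A]

theorem mul_mul_mul_eq_of_anticommute {f e f' e' : A} {r : K}
    (hef' : e * f' + f' * e = algebraMap K A r) :
    (f * e) * (f' * e') = r • (f * e') - f * f' * (e * e') := by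
  calc (f * e) * (f' * e') = f * (e * f') * e' := by noncomm_ring
    _ = f * (algebraMap K A r - f' * e) * e' := by rw [eq_sub_of_add_eq hef']
    _ = r • (f * e') - f * f' * (e * e') := by
      rw [mul_sub, sub_mul, ← Algebra.commutes, mul_assoc (algebraMap K A r), ← Algebra.smul_def]
      noncomm_ring

theorem commutator_mul_mul_of_anticommute {f e f' e' : A} {r s : K}
    (hef' : e * f' + f' * e = algebraMap K A r) (he'f : e' * f + f * e' = algebraMap K A s)
    (hff' : f * f' + f' * f = 0) (hee' : e * e' + e' * e = 0) :
    (f * e) * (f' * e') - (f' * e') * (f * e) = r • (f * e') - s • (f' * e) := by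
  have hquartic : f * f' * (e * e') = f' * f * (e' * e) := by
    rw [eq_neg_of_add_eq_zero_left hff', eq_neg_of_add_eq_zero_left hee', neg_mul_neg]
  rw [mul_mul_mul_eq_of_anticommute hef', mul_mul_mul_eq_of_anticommute he'f, hquartic]
  abel

theorem commutator_mem_span_of_forall_mem {s : Set A}
    (hs : ∀ x ∈ s, ∀ y ∈ s, x * y - y * x ∈ Submodule.span K s) {x y : A}
    (hx : x ∈ Submodule.span K s) (hy : y ∈ Submodule.span K s) :
    x * y - y * x ∈ Submodule.span K s := by
  let bracket : A →ₗ[K] A →ₗ[K] A := LinearMap.mul K A - (LinearMap.mul K A).flip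
  have hmap : Submodule.map₂ bracket (Submodule.span K s) (Submodule.span K s)
      ≤ Submodule.span K s := by
    rw [Submodule.map₂_span_span, Submodule.span_le]
    rintro _ ⟨x, hx, y, hy, rfl⟩
    exact hs x hx y hy
  exact hmap (Submodule.apply_mem_map₂ bracket hx hy)

end Anticommutation

theorem polar_eq_of_hyperbolic {K ι : Type*} [CommRing K] [Fintype ι]
    {Q : QuadraticForm K ((ι → K) × (ι → K))} (hQ : ∀ v, Q v = ∑ a, v.1 a * v.2 a)
    (u v : (ι → K) × (ι → K)) :
    QuadraticMap.polar Q u v = ∑ a, (u.1 a * v.2 a + v.1 a * u.2 a) := by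
  simp only [QuadraticMap.polar, hQ, Prod.fst_add, Prod.snd_add, Pi.add_apply,
    ← Finset.sum_sub_distrib]
  exact Finset.sum_congr rfl fun a _ => by ring

/-- The quadratic elements `F a * E b` satisfy the `gl(n)` commutation relations, and
their span is closed under the commutator. -/
theorem gl_commutation_relations (K : Type*) [CommRing K] (n : ℕ)
    (Q : QuadraticForm K ((Fin n → K) × (Fin n → K)))
    (hQ : ∀ v : (Fin n → K) × (Fin n → K), Q v = ∑ a, v.1 a * v.2 a)
    (E F : Fin n → CliffordAlgebra Q)
    (hE : ∀ a, E a = ι Q ((0 : Fin n → K), Pi.single a 1))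
    (hF : ∀ a, F a = ι Q (Pi.single a 1, (0 : Fin n → K))) :
    (∀ a b c d : Fin n,
      (F a * E b) * (F c * E d) - (F c * E d) * (F a * E b)
        = (if b = c then (1 : K) else 0) • (F a * E d)
          - (if d = a then (1 : K) else 0) • (F c * E b)) ∧
    (∀ x ∈ Submodule.span K (Set.range fun p : Fin n × Fin n => F p.1 * E p.2),
     ∀ y ∈ Submodule.span K (Set.range fun p : Fin n × Fin n => F p.1 * E p.2),
      x * y - y * x ∈ Submodule.span K (Set.range fun p : Fin n × Fin n => F p.1 * E p.2)) := by
  have hrel : ∀ a b c d : Fin n,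
      (F a * E b) * (F c * E d) - (F c * E d) * (F a * E b)
        = (if b = c then (1 : K) else 0) • (F a * E d)
          - (if d = a then (1 : K) else 0) • (F c * E b) := by
    intro a b c d
    simp only [hE, hF]
    apply commutator_mul_mul_of_anticommute <;>
      simp [ι_mul_ι_add_swap, polar_eq_of_hyperbolic hQ, Pi.single_apply]
  refine ⟨hrel, fun x hx y hy => commutator_mem_span_of_forall_mem ?_ hx hy⟩
  rintro _ ⟨p, rfl⟩ _ ⟨q, rfl⟩
  rw [hrel]
  exact sub_mem (Submodule.smul_mem _ _ (Submodule.subset_span ⟨(p.1, q.2), rfl⟩))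
    (Submodule.smul_mem _ _ (Submodule.subset_span ⟨(q.1, p.2), rfl⟩))
end

section
/- In the Clifford algebra of the hyperbolic quadratic form Q on (Fin n → K) × (Fin n → K), the elements E_a and F^a transform under the commutator adjoint action of the gl(n) elements F^c * E_a as the (anti)fundamental and fundamental modules: (F^c * E_a) * E_b − E_b * (F^c * E_a) = −δ_b^c • E_a and (F^a * E_b) * F^c − F^c * (F^a * E_b) = δ_b^c • F^a, for all a, b, c ∈ Fin n. -/
open CliffordAlgebra

/-- The elements `E a` and `F a` transform under the commutator adjoint action of the
`gl(n)` elements `F c * E a` as the (anti)fundamental and fundamental modules. -/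
theorem fundamental_module_action (K : Type*) [CommRing K] (n : ℕ)
    (Q : QuadraticForm K ((Fin n → K) × (Fin n → K)))
    (hQ : ∀ v : (Fin n → K) × (Fin n → K), Q v = ∑ a, v.1 a * v.2 a)
    (E F : Fin n → CliffordAlgebra Q)
    (hE : ∀ a, E a = ι Q ((0 : Fin n → K), Pi.single a 1))
    (hF : ∀ a, F a = ι Q (Pi.single a 1, (0 : Fin n → K))) :
    ∀ a b c : Fin n,
      (F c * E a) * E b - E b * (F c * E a) = -((if b = c then (1 : K) else 0) • E a) ∧
      (F a * E b) * F c - F c * (F a * E b) = (if b = c then (1 : K) else 0) • F a := by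
  have key : ∀ v w : (Fin n → K) × (Fin n → K),
      ι Q v * ι Q w + ι Q w * ι Q v
        = algebraMap K _ (∑ i, (v.1 i * w.2 i + w.1 i * v.2 i)) := by
    intro v w
    rw [ι_mul_ι_add_swap]
    congr 1
    simp only [QuadraticMap.polar, hQ, Prod.fst_add, Prod.snd_add, Pi.add_apply]
    rw [← Finset.sum_sub_distrib, ← Finset.sum_sub_distrib]
    exact Finset.sum_congr rfl fun i _ => by ring
  have single_sum : ∀ i j : Fin n,
      (∑ k, Pi.single (M := fun _ : Fin n => K) i 1 k * Pi.single (M := fun _ : Fin n => K) j 1 k) = if j = i then 1 else 0 := by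
    intro i j
    rw [Finset.sum_eq_single i]
    · by_cases h : j = i <;> simp [h, Pi.single_apply]
    · intro k _ hk; simp [Pi.single_apply, hk]
    · simp
  have hEF : ∀ i j, E i * F j + F j * E i
      = algebraMap K _ (if i = j then 1 else 0) := by
    intro i j
    rw [hE, hF, key]
    congr 1
    simpa using single_sum j i
  have hEE : ∀ i j, E i * E j = -(E j * E i) := by
    intro i j
    rw [hE, hE]
    refine eq_neg_of_add_eq_zero_left ?_
    rw [key]
    simp
  have hFF : ∀ i j, F i * F j = -(F j * F i) := by
    intro i j
    rw [hF, hF]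
    refine eq_neg_of_add_eq_zero_left ?_
    rw [key]
    simp
  have hFE : ∀ i j, F i * E j
      = algebraMap K _ (if j = i then 1 else 0) - E j * F i := by
    intro i j
    have := hEF j i
    rw [add_comm] at this
    exact eq_sub_of_add_eq this
  intro a b c
  have hsmul : ∀ (r : K) (x : CliffordAlgebra Q), r • x = algebraMap K _ r * x :=
    fun r x => (Algebra.smul_def r x)
  constructor
  · rw [hsmul]
    have h2 := hFE c b
    have h3 := hEE a b
    calc (F c * E a) * E b - E b * (F c * E a)
        = F c * (E a * E b) - (E b * F c) * E a := by noncomm_ring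
      _ = F c * (-(E b * E a)) - (algebraMap K _ (if b = c then 1 else 0) - F c * E b) * E a := by
          rw [h3, h2]
          noncomm_ring
      _ = -(algebraMap K _ (if b = c then (1:K) else 0) * E a) + F c * (E b * E a) - F c * (E b * E a) := by
          noncomm_ring
      _ = -(algebraMap K _ (if b = c then (1:K) else 0) * E a) := by abel
  · rw [hsmul]
    have h2 := hEF b c
    have h3 := hFF a c
    calc (F a * E b) * F c - F c * (F a * E b)
        = (F a * E b) * F c - (F c * F a) * E b := by noncomm_ring
      _ = (F a * E b) * F c + (F a * F c) * E b := by rw [h3]; noncomm_ring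
      _ = F a * (E b * F c + F c * E b) := by noncomm_ring
      _ = F a * algebraMap K _ (if b = c then 1 else 0) := by rw [h2]
      _ = algebraMap K _ (if b = c then (1:K) else 0) * F a := (Algebra.commutes _ _).symm
end

section
/- There exists an injective Lie algebra homomorphism from the Lie algebra gl(n, K) of n × n matrices over K (with the commutator bracket) into the Clifford algebra CliffordAlgebra Q (regarded as a Lie algebra via the ring commutator), sending the matrix unit e_{ab} to F^a * E_b for all a, b ∈ Fin n. -/
open CliffordAlgebra

attribute [local instance 100] LieRing.ofAssociativeRing

set_option maxHeartbeats 1000000 in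
/-- There is an injective Lie algebra homomorphism from `gl(n, K)` (matrices with the
commutator bracket) into the Clifford algebra of the hyperbolic form, sending the
matrix unit `e_{ab}` to `F a * E b`. -/
theorem gl_embeds_in_clifford (K : Type*) [Field K] (hK : (2 : K) ≠ 0) (n : ℕ) (hn : 0 < n)
    (Q : QuadraticForm K ((Fin n → K) × (Fin n → K)))
    (hQ : ∀ v : (Fin n → K) × (Fin n → K), Q v = ∑ a, v.1 a * v.2 a)
    (E F : Fin n → CliffordAlgebra Q)
    (hE : ∀ a, E a = ι Q ((0 : Fin n → K), Pi.single a 1))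
    (hF : ∀ a, F a = ι Q (Pi.single a 1, (0 : Fin n → K))) :
    ∃ f : Matrix (Fin n) (Fin n) K →ₗ⁅K⁆ CliffordAlgebra Q,
      Function.Injective f ∧
      ∀ a b : Fin n, f (Matrix.single a b (1 : K)) = F a * E b := by
  classical
  have hpolar : ∀ u v : (Fin n → K) × (Fin n → K),
      QuadraticMap.polar Q u v = ∑ a, (u.1 a * v.2 a + v.1 a * u.2 a) := by
    intro u v
    simp only [QuadraticMap.polar, hQ, Prod.fst_add, Prod.snd_add, Pi.add_apply]
    rw [← Finset.sum_sub_distrib, ← Finset.sum_sub_distrib]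
    exact Finset.sum_congr rfl fun a _ => by ring
  have hδ : ∀ a b : Fin n, (∑ c : Fin n, (Pi.single a 1 : Fin n → K) c * (Pi.single b 1 : Fin n → K) c)
      = if a = b then 1 else 0 := by
    intro a b
    simp [Pi.single_apply, ite_and, eq_comm (a := a)]
  -- basic Clifford relations
  have hFF : ∀ a b, F a * F b + F b * F a = 0 := by
    intro a b
    rw [hF, hF, ι_mul_ι_add_swap, hpolar]
    simp
  have hEE : ∀ a b, E a * E b + E b * E a = 0 := by
    intro a b
    rw [hE, hE, ι_mul_ι_add_swap, hpolar]
    simp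
  have hFE : ∀ a b, F a * E b + E b * F a
      = ((if a = b then 1 else 0 : K)) • (1 : CliffordAlgebra Q) := by
    intro a b
    rw [hF, hE, ι_mul_ι_add_swap, hpolar, Algebra.algebraMap_eq_smul_one]
    congr 1
    rw [← hδ a b]
    exact Finset.sum_congr rfl fun c _ => by simp
  have hEF : ∀ a b, E b * F a
      = ((if a = b then 1 else 0 : K)) • (1 : CliffordAlgebra Q) - F a * E b :=
    fun a b => eq_sub_of_add_eq' (hFE a b)
  have hFF' : ∀ a b, F b * F a = -(F a * F b) :=
    fun a b => eq_neg_of_add_eq_zero_right (hFF a b)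
  have hEE' : ∀ a b, E b * E a = -(E a * E b) :=
    fun a b => eq_neg_of_add_eq_zero_right (hEE a b)
  -- key commutator relation
  have key : ∀ a b c d : Fin n,
      (F a * E b) * (F c * E d) - (F c * E d) * (F a * E b)
        = (if c = b then 1 else 0 : K) • (F a * E d)
          - (if a = d then 1 else 0 : K) • (F c * E b) := by
    intro a b c d
    have h1 : (F a * E b) * (F c * E d)
        = (if c = b then 1 else 0 : K) • (F a * E d) - F a * (F c * (E b * E d)) := by
      calc (F a * E b) * (F c * E d) = F a * ((E b * F c) * E d) := by noncomm_ring
        _ = F a * ((((if c = b then 1 else 0 : K)) • (1 : CliffordAlgebra Q)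
              - F c * E b) * E d) := by rw [hEF]
        _ = _ := by
            simp only [sub_mul, smul_mul_assoc, one_mul, mul_sub, mul_smul_comm]
            noncomm_ring
    have h2 : (F c * E d) * (F a * E b)
        = (if a = d then 1 else 0 : K) • (F c * E b) - F a * (F c * (E b * E d)) := by
      calc (F c * E d) * (F a * E b) = F c * ((E d * F a) * E b) := by noncomm_ring
        _ = F c * ((((if a = d then 1 else 0 : K)) • (1 : CliffordAlgebra Q)
              - F a * E d) * E b) := by rw [hEF]
        _ = _ := by
            have haux : F c * (F a * (E d * E b)) = F a * (F c * (E b * E d)) := by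
              have h := congrArg₂ (· * ·) (hFF' a c) (hEE' b d)
              simp only [neg_mul_neg] at h
              simpa [mul_assoc] using h
            simp only [sub_mul, smul_mul_assoc, one_mul, mul_sub, mul_smul_comm, mul_assoc]
            rw [haux]
    rw [h1, h2]
    abel
  -- the linear map
  let f0 : Matrix (Fin n) (Fin n) K →ₗ[K] CliffordAlgebra Q :=
    { toFun := fun M => ∑ p : Fin n × Fin n, M p.1 p.2 • (F p.1 * E p.2)
      map_add' := by
        intro M N
        simp [Matrix.add_apply, add_smul, Finset.sum_add_distrib]
      map_smul' := by
        intro c M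
        simp [Matrix.smul_apply, smul_smul, Finset.smul_sum] }
  have hf0 : ∀ M : Matrix (Fin n) (Fin n) K,
      f0 M = ∑ p : Fin n × Fin n, M p.1 p.2 • (F p.1 * E p.2) := fun _ => rfl
  have hstd : ∀ a b : Fin n, f0 (Matrix.single a b 1) = F a * E b := by
    intro a b
    rw [hf0]
    rw [Fintype.sum_prod_type]
    simp [Matrix.single, ite_and, ite_smul, Finset.sum_ite_eq]
  -- the bracket identity
  have hbil : ∀ M N : Matrix (Fin n) (Fin n) K,
      f0 (M * N - N * M) = f0 M * f0 N - f0 N * f0 M := by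
    intro M N
    let B1 : Matrix (Fin n) (Fin n) K →ₗ[K] Matrix (Fin n) (Fin n) K →ₗ[K]
        CliffordAlgebra Q := LinearMap.mk₂ K (fun M N => f0 (M * N - N * M))
      (by intro M M' N
          rw [show (M + M') * N - N * (M + M')
                = (M * N - N * M) + (M' * N - N * M') by noncomm_ring, map_add])
      (by intro c M N
          rw [show (c • M) * N - N * (c • M) = c • (M * N - N * M) by
                simp [smul_sub, smul_mul_assoc, mul_smul_comm], map_smul])
      (by intro M N N'
          rw [show M * (N + N') - (N + N') * M
                = (M * N - N * M) + (M * N' - N' * M) by noncomm_ring, map_add])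
      (by intro c M N
          rw [show M * (c • N) - (c • N) * M = c • (M * N - N * M) by
                simp [smul_sub, smul_mul_assoc, mul_smul_comm], map_smul])
    let B2 : Matrix (Fin n) (Fin n) K →ₗ[K] Matrix (Fin n) (Fin n) K →ₗ[K]
        CliffordAlgebra Q := LinearMap.mk₂ K (fun M N => f0 M * f0 N - f0 N * f0 M)
      (by intro M M' N; simp only [map_add, add_mul, mul_add]; abel)
      (by intro c M N; simp only [map_smul, smul_mul_assoc, mul_smul_comm, smul_sub])
      (by intro M N N'; simp only [map_add, add_mul, mul_add]; abel)
      (by intro c M N; simp only [map_smul, smul_mul_assoc, mul_smul_comm, smul_sub])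
    have hB : B1 = B2 := by
      apply (Matrix.stdBasis K (Fin n) (Fin n)).ext
      intro p
      apply (Matrix.stdBasis K (Fin n) (Fin n)).ext
      intro q
      obtain ⟨a, b⟩ := p
      obtain ⟨c, d⟩ := q
      simp only [B1, B2, LinearMap.mk₂_apply, Matrix.stdBasis_eq_single]
      rw [hstd a b, hstd c d, key a b c d]
      by_cases hbc : b = c
      · subst hbc
        by_cases had : d = a
        · subst had
          simp [Matrix.single_mul_single_same, map_sub, hstd]
        · have had' : ¬a = d := fun h => had h.symm
          simp [Matrix.single_mul_single_same, Matrix.single_mul_single_of_ne,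
            had, had', map_sub, map_zero, hstd]
      · have hbc' : ¬c = b := fun h => hbc h.symm
        by_cases had : d = a
        · subst had
          simp [Matrix.single_mul_single_same, Matrix.single_mul_single_of_ne,
            hbc, hbc', map_sub, map_zero, hstd]
        · have had' : ¬a = d := fun h => had h.symm
          simp [Matrix.single_mul_single_of_ne, hbc, hbc', had, had',
            map_sub, map_zero, hstd]
    exact congrFun (congrArg (fun L => (L M : _ → _)) hB) N
  -- a representation on the exterior algebra to prove injectivity
  let A := CliffordAlgebra (0 : QuadraticForm K (Fin n → K))
  let j : (Fin n → K) →ₗ[K] A := CliffordAlgebra.ι (0 : QuadraticForm K (Fin n → K))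
  let dl : (Fin n → K) →ₗ[K] Module.Dual K (Fin n → K) :=
    LinearMap.mk₂ K (fun y x => ∑ a, y a * x a)
      (by intro y y' x; simp [add_mul, Finset.sum_add_distrib])
      (by intro c y x; simp [Finset.mul_sum, mul_assoc])
      (by intro y x x'; simp [mul_add, Finset.sum_add_distrib])
      (by intro c y x; simp [Finset.mul_sum, mul_left_comm])
  have hdl : ∀ y x : Fin n → K, dl y x = ∑ a, y a * x a := fun _ _ => rfl
  let φ : ((Fin n → K) × (Fin n → K)) →ₗ[K] Module.End K A :=
    { toFun := fun v => LinearMap.mulLeft K (j v.1) + contractLeft (dl v.2)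
      map_add' := by
        intro u v
        refine LinearMap.ext fun x => ?_
        simp only [LinearMap.add_apply, LinearMap.mulLeft_apply, map_add]
        rw [Prod.fst_add, Prod.snd_add, map_add j, map_add dl, map_add, add_mul,
          LinearMap.add_apply]
        abel
      map_smul' := by
        intro c v
        refine LinearMap.ext fun x => ?_
        simp only [LinearMap.add_apply, LinearMap.mulLeft_apply, RingHom.id_apply,
          LinearMap.smul_apply, Prod.smul_fst, Prod.smul_snd, map_smul, smul_mul_assoc,
          smul_add] }
  have hφ : ∀ v x, φ v x = j v.1 * x + contractLeft (dl v.2) x := fun _ _ => rfl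
  have cond : ∀ v, φ v * φ v = algebraMap K (Module.End K A) (Q v) := by
    intro v
    refine LinearMap.ext fun x => ?_
    rw [Module.End.mul_apply, hφ, hφ, Module.algebraMap_end_apply]
    rw [mul_add, map_add, contractLeft_ι_mul, contractLeft_contractLeft]
    have h0 : j v.1 * (j v.1 * x) = 0 := by
      rw [← mul_assoc, ι_sq_scalar, QuadraticMap.zero_apply, map_zero, zero_mul]
    rw [h0]
    have : dl v.2 v.1 = Q v := by
      rw [hdl, hQ]
      exact Finset.sum_congr rfl fun a _ => mul_comm _ _
    rw [this]
    abel
  let ρ := CliffordAlgebra.lift Q ⟨φ, cond⟩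
  have hρF : ∀ a, ρ (F a) = LinearMap.mulLeft K (j (Pi.single a 1)) := by
    intro a
    rw [hF, CliffordAlgebra.lift_ι_apply]
    show LinearMap.mulLeft K (j (Pi.single a 1)) + contractLeft (dl 0) = _
    rw [map_zero, map_zero, add_zero]
  have hρE : ∀ b, ρ (E b) = contractLeft (dl (Pi.single b 1)) := by
    intro b
    rw [hE, CliffordAlgebra.lift_ι_apply]
    show LinearMap.mulLeft K (j 0) + contractLeft (dl (Pi.single b 1)) = _
    rw [map_zero, LinearMap.mulLeft_zero_eq_zero, zero_add]
  have hker : ∀ M : Matrix (Fin n) (Fin n) K, f0 M = 0 → M = 0 := by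
    intro M hM
    have h1 : ρ (f0 M) = 0 := by rw [hM, map_zero]
    ext a b'
    have h2 : ρ (f0 M) (j (Pi.single b' 1)) = 0 := by rw [h1]; rfl
    rw [hf0, map_sum] at h2
    simp only [map_smul, map_mul, hρF, hρE, LinearMap.sum_apply, LinearMap.smul_apply,
      Module.End.mul_apply, LinearMap.mulLeft_apply] at h2
    have h3 : ∀ p : Fin n × Fin n,
        dl (Pi.single p.2 1) (Pi.single b' 1) = if p.2 = b' then 1 else 0 := by
      intro p; rw [hdl]; exact hδ p.2 b'
    have hj : j = CliffordAlgebra.ι (0 : QuadraticForm K (Fin n → K)) := rfl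
    rw [hj] at h2
    have h4 : ∀ p : Fin n × Fin n, M p.1 p.2 •
        (CliffordAlgebra.ι (0 : QuadraticForm K (Fin n → K)) (Pi.single p.1 1) *
          contractLeft (dl (Pi.single p.2 1))
            (CliffordAlgebra.ι (0 : QuadraticForm K (Fin n → K)) (Pi.single b' 1)))
        = (if p.2 = b' then M p.1 p.2 else 0) •
            CliffordAlgebra.ι (0 : QuadraticForm K (Fin n → K)) (Pi.single p.1 1) := by
      intro p
      rw [contractLeft_ι, h3]
      by_cases h : p.2 = b' <;> simp [h, Algebra.commutes, ← Algebra.smul_def]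
    rw [Finset.sum_congr rfl (fun p _ => h4 p)] at h2
    rw [Fintype.sum_prod_type] at h2
    simp only [Finset.sum_ite_eq' Finset.univ b', Finset.mem_univ, if_true] at h2
    have h5 : CliffordAlgebra.ι (0 : QuadraticForm K (Fin n → K))
        (∑ p1, M p1 b' • (Pi.single p1 1 : Fin n → K))
        = CliffordAlgebra.ι (0 : QuadraticForm K (Fin n → K)) 0 := by
      rw [map_sum, map_zero]
      simpa [map_smul] using h2
    have h6 := (ExteriorAlgebra.ι_inj K _ _).mp h5
    have h7 := congrFun h6 a
    simpa [Finset.sum_apply, Pi.single_apply, Finset.sum_ite_eq'] using h7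
  -- assemble the Lie algebra homomorphism
  refine ⟨{ toLinearMap := f0, map_lie' := ?_ }, ?_, ?_⟩
  · intro x y
    rw [Ring.lie_def, Ring.lie_def]
    exact hbil x y
  · intro x y hxy
    have : f0 (x - y) = 0 := by
      rw [map_sub]
      rw [show f0 x = f0 y from hxy, sub_self]
    have := hker _ this
    exact sub_eq_zero.mp this
  · exact hstd
end

section
/- In the Clifford algebra of the hyperbolic quadratic form Q on (Fin n → K) × (Fin n → K), with the commutator [x,y] = xy − yx, for all a, b, c, d, e ∈ Fin n the relation [F^a * E_b, [F^c * E_d, E_e]] − [F^c * E_d, [F^a * E_b, E_e]] = [[F^a * E_b, F^c * E_d], E_e] holds, and both sides equal δ_d^a δ_e^c • E_b − δ_b^c δ_e^a • E_d. -/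
open CliffordAlgebra

/-- The span of the `E a` is a module under the commutator action of the elements
`F a * E b`: the double-commutator (Jacobi-type) relation holds, and both sides equal
`δ_d^a δ_e^c • E b - δ_b^c δ_e^a • E d`. -/
theorem module_double_commutator (K : Type*) [CommRing K] (n : ℕ)
    (Q : QuadraticForm K ((Fin n → K) × (Fin n → K)))
    (hQ : ∀ v : (Fin n → K) × (Fin n → K), Q v = ∑ a, v.1 a * v.2 a)
    (E F : Fin n → CliffordAlgebra Q)
    (hE : ∀ a, E a = ι Q ((0 : Fin n → K), Pi.single a 1))
    (hF : ∀ a, F a = ι Q (Pi.single a 1, (0 : Fin n → K))) :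
    ∀ a b c d e : Fin n,
      ((F a * E b) * ((F c * E d) * E e - E e * (F c * E d))
          - ((F c * E d) * E e - E e * (F c * E d)) * (F a * E b))
        - ((F c * E d) * ((F a * E b) * E e - E e * (F a * E b))
          - ((F a * E b) * E e - E e * (F a * E b)) * (F c * E d))
        = ((F a * E b) * (F c * E d) - (F c * E d) * (F a * E b)) * E e
          - E e * ((F a * E b) * (F c * E d) - (F c * E d) * (F a * E b)) ∧
      ((F a * E b) * (F c * E d) - (F c * E d) * (F a * E b)) * E e
          - E e * ((F a * E b) * (F c * E d) - (F c * E d) * (F a * E b))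
        = ((if d = a then (1 : K) else 0) * (if e = c then (1 : K) else 0)) • E b
          - ((if b = c then (1 : K) else 0) * (if e = a then (1 : K) else 0)) • E d := by
  -- anticommutation of E's
  have hEE : ∀ i j, E i * E j = - (E j * E i) := by
    intro i j
    have h := CliffordAlgebra.ι_mul_ι_add_swap (Q := Q)
      ((0 : Fin n → K), Pi.single i 1) ((0 : Fin n → K), Pi.single j 1)
    have hp : QuadraticMap.polar Q ((0 : Fin n → K), Pi.single i 1)
        ((0 : Fin n → K), Pi.single j 1) = 0 := by
      simp [QuadraticMap.polar, hQ]
    rw [hp, map_zero] at h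
    rw [hE i, hE j]
    exact eq_neg_of_add_eq_zero_left h
  -- E e * F a relation
  have hEF : ∀ e a, E e * F a
      = (if e = a then (1 : K) else 0) • (1 : CliffordAlgebra Q) - F a * E e := by
    intro e a
    have h := CliffordAlgebra.ι_mul_ι_add_swap (Q := Q)
      ((0 : Fin n → K), Pi.single e 1) (Pi.single a 1, (0 : Fin n → K))
    have hp : QuadraticMap.polar Q ((0 : Fin n → K), Pi.single e 1)
        (Pi.single a 1, (0 : Fin n → K)) = if e = a then (1 : K) else 0 := by
      simp [QuadraticMap.polar, hQ, Pi.single_apply, mul_comm, eq_comm]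
    rw [hp, Algebra.algebraMap_eq_smul_one] at h
    rw [hE e, hF a]
    exact eq_sub_of_add_eq h
  -- single commutator
  have hcomm : ∀ a b e, (F a * E b) * E e - E e * (F a * E b)
      = - ((if e = a then (1 : K) else 0) • E b) := by
    intro a b e
    have h1 : E e * (F a * E b) = (if e = a then (1 : K) else 0) • E b + F a * (E b * E e) := by
      rw [← mul_assoc, hEF e a, sub_mul, smul_mul_assoc, one_mul, mul_assoc, hEE e b,
        mul_neg, sub_neg_eq_add]
    rw [h1, ← mul_assoc]
    abel
  -- double commutator
  have hdc : ∀ a b c d e, (F a * E b) * ((F c * E d) * E e - E e * (F c * E d))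
      - ((F c * E d) * E e - E e * (F c * E d)) * (F a * E b)
      = ((if e = c then (1 : K) else 0) * (if d = a then (1 : K) else 0)) • E b := by
    intro a b c d e
    rw [hcomm c d e]
    calc (F a * E b) * -((if e = c then (1 : K) else 0) • E d)
          - (-((if e = c then (1 : K) else 0) • E d)) * (F a * E b)
        = -((if e = c then (1 : K) else 0) •
            ((F a * E b) * E d - E d * (F a * E b))) := by
          rw [smul_sub, mul_neg, neg_mul, mul_smul_comm, smul_mul_assoc]; abel
      _ = -((if e = c then (1 : K) else 0) • -((if d = a then (1 : K) else 0) • E b)) := by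
          rw [hcomm a b d]
      _ = ((if e = c then (1 : K) else 0) * (if d = a then (1 : K) else 0)) • E b := by
          rw [smul_neg, neg_neg, smul_smul]
  intro a b c d e
  have jac : ((F a * E b) * ((F c * E d) * E e - E e * (F c * E d))
          - ((F c * E d) * E e - E e * (F c * E d)) * (F a * E b))
        - ((F c * E d) * ((F a * E b) * E e - E e * (F a * E b))
          - ((F a * E b) * E e - E e * (F a * E b)) * (F c * E d))
        = ((F a * E b) * (F c * E d) - (F c * E d) * (F a * E b)) * E e
          - E e * ((F a * E b) * (F c * E d) - (F c * E d) * (F a * E b)) := by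
    noncomm_ring
  refine ⟨jac, ?_⟩
  rw [← jac, hdc a b c d e, hdc c d a b e, mul_comm (if e = c then (1:K) else 0),
    mul_comm (if e = a then (1:K) else 0)]
end
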